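/- Let 0 < t < 2 be real, set z := t/√(1 − t/2), m := (2z)^{−1/2}, Λ := m⁻³, u₃ := −m²·(2t − t²/4) − (3/8)mΛ, and let g₂, g₃ be the equal-mass N_f = 3 Weierstrass invariants and D(u) := g₂(u)³ − 27g₃(u)². Then D′(u₃) = −z·(2+t)⁹·(4−t)³/(1024·t·(2−t)⁴). Consequently, with 𝚖 := 1728·g₂(u₃)³/D′(u₃) and 𝚡 := √(z(2−t)²/((2+t)²·t·(4−t))) (the positive square root), one has −4·𝚖·𝚡⁷ = (1 − t/2)^{3/4}·(1 − t/4)^{−1/2}·(1 + t/2)^{−4}. -/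

import Mathlib

/-!
With `Λ₀ = 1` the decoupling relation `m³Λ = 1` and `z = 1/(2m²)` turn `g₂`, `g₃` into
polynomials in `z` and `u`, and put the monopole point at `u₃ = -(2t - t²/4)/(2z) - 3z/4`.
Writing `t = 2 - 2s²` with `s = √(1 - t/2) ∈ (0, 1)` gives `z = t/s`, so every quantity in
sight is a rational function of `s` and both `D′(u₃)` and `𝚖` are identities of rational
functions. The coupling `-4𝚖𝚡⁷` and `X₃` are both positive, and their fourth powers are again
rational in `s` (only `𝚡²` enters, and the exponents `3/4, -1/2, -4` become integers), hence
they agree.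
-/

/- `g₂`, `g₃` and `D` of the equal-mass `N_f = 3` curve, with `m` and `Λ` eliminated through
`m³Λ = 1` and `z = 1/(2m²)` (see `invariantG₂_eq`, `invariantG₃_eq`). -/
noncomputable def invariantG₂ (z u : ℝ) : ℝ := 4/3*u^2 - 2/3*z^3*u + (z^6/48 + 3/4*z^2 - 1)

noncomputable def invariantG₃ (z u : ℝ) : ℝ :=
  8/27*u^3 + 5/18*z^3*u^2 - (z^6/36 + z^2/2 + 1/3)*u + (z^9/1728 + z^5/32 - z^3/24 + 3/8*z)

noncomputable def discriminant (z u : ℝ) : ℝ := invariantG₂ z u ^ 3 - 27 * invariantG₃ z u ^ 2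

noncomputable def monopolePoint (t z : ℝ) : ℝ := -(2*t - t^2/4)/(2*z) - 3/4*z

section Decoupling

variable {m Λ z : ℝ} (hm : m ≠ 0) (hΛ : Λ = 1/m^3) (hz : z = 1/(2*m^2))
include hm hΛ hz

theorem invariantG₂_eq (u : ℝ) :
    Λ^4/3072 - Λ*m^3 + (1/48)*Λ^2*(9*m^2 - 4*u) + (4/3)*u^2 = invariantG₂ z u := by
  subst hΛ hz; unfold invariantG₂; field_simp; ring

theorem invariantG₃_eq (u : ℝ) :
    (8/27)*u^3 + (5/144)*Λ^2*u^2 - Λ*u*(Λ^3 + 768*m^3 + 288*Λ*m^2)/2304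
      + Λ^2*(Λ^4 + 165888*m^4 - 4608*Λ*m^3 + 864*Λ^2*m^2)/884736 = invariantG₃ z u := by
  subst hΛ hz; unfold invariantG₃; field_simp; ring

theorem monopolePoint_eq (t : ℝ) : -m^2 * (2*t - t^2/4) - (3/8)*m*Λ = monopolePoint t z := by
  subst hΛ hz; unfold monopolePoint; field_simp; ring

end Decoupling

theorem hasDerivAt_invariantG₂ (z u : ℝ) :
    HasDerivAt (invariantG₂ z) (8/3*u - 2/3*z^3) u := by
  have h := (((hasDerivAt_pow 2 u).const_mul (4/3)).sub
    ((hasDerivAt_id u).const_mul (2/3*z^3))).add_const (z^6/48 + 3/4*z^2 - 1)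
  exact h.congr_deriv (by norm_num; ring)

theorem hasDerivAt_invariantG₃ (z u : ℝ) :
    HasDerivAt (invariantG₃ z) (8/9*u^2 + 5/9*z^3*u - (z^6/36 + z^2/2 + 1/3)) u := by
  have h := ((((hasDerivAt_pow 3 u).const_mul (8/27)).add
    ((hasDerivAt_pow 2 u).const_mul (5/18*z^3))).sub
    ((hasDerivAt_id u).const_mul (z^6/36 + z^2/2 + 1/3))).add_const
    (z^9/1728 + z^5/32 - z^3/24 + 3/8*z)
  exact h.congr_deriv (by norm_num; ring)

theorem HasDerivAt.cube_sub_sq {f g : ℝ → ℝ} {f' g' x : ℝ} (hf : HasDerivAt f f' x)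
    (hg : HasDerivAt g g' x) :
    HasDerivAt (fun v => f v ^ 3 - 27 * g v ^ 2) (3 * f x ^ 2 * f' - 54 * g x * g') x :=
  ((hf.pow 3).sub ((hg.pow 2).const_mul 27)).congr_deriv (by push_cast; ring)

noncomputable def goettscheKoolX₃ (t : ℝ) : ℝ :=
  (1 - t/2) ^ ((3:ℝ)/4) * (1 - t/4) ^ (-(1:ℝ)/2) * (1 + t/2) ^ (-(4:ℝ))

theorem goettscheKoolX₃_pos {t : ℝ} (h₁ : -2 < t) (h₂ : t < 2) : 0 < goettscheKoolX₃ t := by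
  unfold goettscheKoolX₃
  have : 0 < 1 - t/2 := by linarith
  have : 0 < 1 - t/4 := by linarith
  have : 0 < 1 + t/2 := by linarith
  positivity

theorem goettscheKoolX₃_pow_four {t : ℝ} (h₁ : -2 ≤ t) (h₂ : t ≤ 2) :
    goettscheKoolX₃ t ^ 4 = (1 - t/2)^3 / ((1 - t/4)^2 * (1 + t/2)^16) := by
  unfold goettscheKoolX₃
  simp only [mul_pow, ← Real.rpow_mul_natCast (by linarith : (0:ℝ) ≤ 1 - t/2),
    ← Real.rpow_mul_natCast (by linarith : (0:ℝ) ≤ 1 - t/4),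
    ← Real.rpow_mul_natCast (by linarith : (0:ℝ) ≤ 1 + t/2)]
  norm_num [Real.rpow_neg]
  rw [mul_assoc, ← mul_inv, ← div_eq_mul_inv]

section Monopole

variable {s t z : ℝ} (hs0 : 0 < s) (hs1 : s < 1) (ht : t = 2 - 2*s^2) (hz : z = t/s)
include hs0 hs1 ht hz

theorem invariantG₂_monopolePoint :
    invariantG₂ z (monopolePoint t z) = (2+t)^4*(4-t)^2/(96*(2-t)^3) := by
  have h1 : 1 - s^2 ≠ 0 := by nlinarith
  subst hz ht; unfold invariantG₂ monopolePoint; field_simp; ring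

theorem hasDerivAt_discriminant_monopolePoint :
    HasDerivAt (discriminant z) (-z*(2 + t)^9*(4 - t)^3/(1024*t*(2 - t)^4))
      (monopolePoint t z) := by
  have h1 : 1 - s^2 ≠ 0 := by nlinarith
  have h2 : 2 - s^2 ≠ 0 := by nlinarith
  have h3 : 1 + s^2 ≠ 0 := by positivity
  refine ((hasDerivAt_invariantG₂ z _).cube_sub_sq (hasDerivAt_invariantG₃ z _)).congr_deriv ?_
  subst hz ht; unfold invariantG₂ invariantG₃ monopolePoint; field_simp; ring

theorem neg_four_mul_pow_seven_eq_goettscheKoolX₃ {M x : ℝ}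
    (hM : M = 1728 * ((2+t)^4*(4-t)^2/(96*(2-t)^3))^3
      / (-z*(2 + t)^9*(4 - t)^3/(1024*t*(2 - t)^4)))
    (hx0 : 0 ≤ x) (hx : x^2 = z*(2 - t)^2/((2 + t)^2*t*(4 - t))) :
    -4 * M * x^7 = goettscheKoolX₃ t := by
  have ht0 : 0 < t := by nlinarith
  have ht2 : t < 2 := by nlinarith
  have hM0 : M < 0 := by
    have : 0 < z := by rw [hz]; positivity
    have : 0 < 4 - t := by linarith
    have : 0 < 2 - t := by linarith
    rw [hM, neg_mul, neg_mul, neg_div]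
    exact div_neg_of_pos_of_neg (by positivity) (neg_neg_of_pos (by positivity))
  refine (pow_left_inj₀ (mul_nonneg (by linarith) (pow_nonneg hx0 7))
    (goettscheKoolX₃_pos (by linarith) ht2).le four_ne_zero).1 ?_
  rw [goettscheKoolX₃_pow_four (by linarith) ht2.le,
    show (-4 * M * x^7)^4 = 256 * M^4 * (x^2)^14 by ring, hx, hM]
  have h1 : 1 - s^2 ≠ 0 := by nlinarith
  have h2 : 2 - s^2 ≠ 0 := by nlinarith
  have h3 : 1 + s^2 ≠ 0 := by positivity
  subst hz ht; field_simp; ring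

end Monopole

theorem stmt_8 (t z m Λ u3 : ℝ) (ht0 : 0 < t) (ht2 : t < 2)
    (hz : z = t / Real.sqrt (1 - t/2))
    (hm : m = 1 / Real.sqrt (2*z))
    (hΛ : Λ = 1 / m^3)
    (hu3 : u3 = -m^2 * (2*t - t^2/4) - (3/8)*m*Λ)
    (g2 g3 D : ℝ → ℝ)
    (hg2 : ∀ v, g2 v = Λ^4/3072 - Λ*m^3 + (1/48)*Λ^2*(9*m^2 - 4*v) + (4/3)*v^2)
    (hg3 : ∀ v, g3 v = (8/27)*v^3 + (5/144)*Λ^2*v^2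
        - Λ*v*(Λ^3 + 768*m^3 + 288*Λ*m^2)/2304
        + Λ^2*(Λ^4 + 165888*m^4 - 4608*Λ*m^3 + 864*Λ^2*m^2)/884736)
    (hD : ∀ v, D v = g2 v ^ 3 - 27 * g3 v ^ 2)
    (mCoef xPer : ℝ)
    (hmCoef : mCoef = 1728 * g2 u3 ^ 3 / deriv D u3)
    (hxPer : xPer = Real.sqrt (z*(2 - t)^2/((2 + t)^2*t*(4 - t)))) :
    deriv D u3 = -z*(2 + t)^9*(4 - t)^3/(1024*t*(2 - t)^4) ∧
    -4 * mCoef * xPer^7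
      = (1 - t/2) ^ ((3:ℝ)/4) * (1 - t/4) ^ (-(1:ℝ)/2) * (1 + t/2) ^ (-(4:ℝ)) := by
  set s := Real.sqrt (1 - t/2)
  have hs0 : 0 < s := Real.sqrt_pos.2 (by linarith)
  have hs1 : s < 1 := (Real.sqrt_lt' one_pos).2 (by linarith)
  have hts : t = 2 - 2*s^2 := by rw [Real.sq_sqrt (by linarith)]; ring
  have hz0 : 0 < z := by rw [hz]; positivity
  have hm0 : m ≠ 0 := by
    rw [hm]; exact one_div_ne_zero (Real.sqrt_pos.2 (by positivity)).ne'
  have hzm : z = 1/(2*m^2) := by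
    rw [hm, div_pow, Real.sq_sqrt (by positivity)]; field_simp
  have hDz : D = discriminant z := funext fun v => by
    rw [hD, hg2, hg3, invariantG₂_eq hm0 hΛ hzm, invariantG₃_eq hm0 hΛ hzm]; rfl
  have hu : u3 = monopolePoint t z := hu3.trans (monopolePoint_eq hm0 hΛ hzm t)
  have hderiv : deriv D u3 = -z*(2 + t)^9*(4 - t)^3/(1024*t*(2 - t)^4) := by
    rw [hDz, hu]; exact (hasDerivAt_discriminant_monopolePoint hs0 hs1 hts hz).deriv
  have hg2u : g2 u3 = (2+t)^4*(4-t)^2/(96*(2-t)^3) := by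
    rw [hg2, invariantG₂_eq hm0 hΛ hzm, hu, invariantG₂_monopolePoint hs0 hs1 hts hz]
  refine ⟨hderiv, ?_⟩
  rw [hg2u, hderiv] at hmCoef
  refine neg_four_mul_pow_seven_eq_goettscheKoolX₃ hs0 hs1 hts hz hmCoef ?_ ?_
  · rw [hxPer]; exact Real.sqrt_nonneg _
  · rw [hxPer, Real.sq_sqrt]
    have : 0 < 4 - t := by linarith
    positivity
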